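/- Let h : (ℂ, 0) → (ℂ, 0) be a germ of biholomorphism and suppose there exist constants α ∈ ℂ*, β ∈ ℂ, λ ∈ ℂ, an integer k ≥ 1, and a holomorphic germ a with a(0) = 0 and vanishing order k at 0, such that f(y) = α·f(h(y)) + β where f(y) = ∫ y^λ exp(1/a(y)) dy (a fixed local determination on a sector). Then h'(0)^k = 1. -/

import Mathlib

/-!
Differentiating `f = α · f ∘ h + β` gives
`exp (λ L y + 1/a y) = α · exp (λ L (h y) + 1/a (h y)) · h' y`. Take `log ‖·‖` along a ray
`y = t c` and multiply by `t ^ k`. Since `L` differs from the principal logarithm by a constant on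
the preconnected sector, `Re (λ L)` is `O(log t)`, so as `t → 0⁺` only the `1/a` terms survive:
`Re (c⁻ᵏ / u 0) = Re ((h'(0) c)⁻ᵏ / u 0)`. Taking `c = exp (θ I)` for all `θ` in an open
interval forces `(1 - h'(0)⁻ᵏ) / u 0 = 0`.
-/

open Complex Filter Set Topology

def sector (r θ₁ θ₂ : ℝ) : Set ℂ :=
  {y | y ≠ 0 ∧ ‖y‖ < r ∧ θ₁ < arg y ∧ arg y < θ₂}

section Sector

variable {r θ₁ θ₂ : ℝ}

lemma sector_subset_slitPlane (hθ₂ : θ₂ ≤ Real.pi) : sector r θ₁ θ₂ ⊆ slitPlane :=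
  fun _ ⟨hy0, _, _, hy⟩ => mem_slitPlane_iff_arg.mpr ⟨(hy.trans_le hθ₂).ne, hy0⟩

lemma isOpen_sector (hθ₂ : θ₂ ≤ Real.pi) : IsOpen (sector r θ₁ θ₂) := by
  refine isOpen_iff_mem_nhds.mpr fun y hy => ?_
  have harg : ContinuousAt arg y := continuousAt_arg (sector_subset_slitPlane hθ₂ hy)
  obtain ⟨hy0, hyr, hy₁, hy₂⟩ := hy
  filter_upwards [eventually_ne_nhds hy0, continuous_norm.continuousAt.eventually_lt
    continuousAt_const hyr, continuousAt_const.eventually_lt harg hy₁,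
    harg.eventually_lt continuousAt_const hy₂] with z h₀ hr h₁ h₂
  exact ⟨h₀, hr, h₁, h₂⟩

lemma ofReal_mul_exp_mem_sector (hθ₁ : -Real.pi < θ₁) (hθ₂ : θ₂ ≤ Real.pi) {t θ : ℝ}
    (ht : t ∈ Ioo 0 r) (hθ : θ ∈ Ioo θ₁ θ₂) : (t : ℂ) * exp (θ * I) ∈ sector r θ₁ θ₂ := by
  have harg : arg ((t : ℂ) * exp (θ * I)) = θ := by
    rw [arg_real_mul _ ht.1, exp_mul_I,
      arg_cos_add_sin_mul_I ⟨hθ₁.trans hθ.1, hθ.2.le.trans hθ₂⟩]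
  refine ⟨mul_ne_zero (ofReal_ne_zero.mpr ht.1.ne') (exp_ne_zero _), ?_, ?_, ?_⟩
  · simpa [norm_exp, abs_of_pos ht.1] using ht.2
  · rw [harg]; exact hθ.1
  · rw [harg]; exact hθ.2

lemma isPreconnected_sector (hθ₁ : -Real.pi < θ₁) (hθ₂ : θ₂ ≤ Real.pi) :
    IsPreconnected (sector r θ₁ θ₂) := by
  have himage : (fun p : ℝ × ℝ => (p.1 : ℂ) * exp (p.2 * I)) '' (Ioo 0 r ×ˢ Ioo θ₁ θ₂)
      = sector r θ₁ θ₂ := by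
    refine Subset.antisymm ?_ fun y hy => ⟨(‖y‖, arg y), ?_, norm_mul_exp_arg_mul_I y⟩
    · rintro _ ⟨p, hp, rfl⟩
      exact ofReal_mul_exp_mem_sector hθ₁ hθ₂ hp.1 hp.2
    · obtain ⟨hy0, hyr, hy₁, hy₂⟩ := hy
      exact ⟨⟨norm_pos_iff.mpr hy0, hyr⟩, hy₁, hy₂⟩
  rw [← himage]
  exact (isPreconnected_Ioo.prod isPreconnected_Ioo).image _ (by fun_prop)

end Sector

lemma exists_abs_im_le_of_exp_eq {S : Set ℂ} {L : ℂ → ℂ} (hS : IsPreconnected S)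
    (hSslit : S ⊆ slitPlane) (hLcont : ContinuousOn L S) (hL : ∀ y ∈ S, exp (L y) = y) :
    ∃ C, ∀ y ∈ S, |(L y).im| ≤ C := by
  rcases S.eq_empty_or_nonempty with rfl | ⟨y₀, hy₀⟩
  · exact ⟨0, by simp⟩
  have hdiff : ∀ y ∈ S, L y - log y ∈ AddSubgroup.zmultiples (2 * Real.pi * I) := by
    intro y hy
    obtain ⟨n, hn⟩ := exp_eq_exp_iff_exists_int.mp
      ((hL y hy).trans (exp_log (slitPlane_ne_zero (hSslit hy))).symm)
    exact ⟨n, by rw [hn]; simp⟩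
  have hconst : ∀ y ∈ S, L y - log y = L y₀ - log y₀ := fun y hy =>
    hS.constant_of_mapsTo (isDiscrete_iff_discreteTopology.mpr
      (NormedSpace.discreteTopology_zmultiples _)) (hLcont.sub
      (continuousOn_of_forall_continuousAt fun y hy => continuousAt_clog (hSslit hy))) hdiff hy hy₀
  refine ⟨Real.pi + |(L y₀ - log y₀).im|, fun y hy => ?_⟩
  have him : (L y).im = arg y + (L y₀ - log y₀).im := by
    rw [← hconst y hy]; simp [log_im]
  rw [him]
  exact (abs_add_le _ _).trans (add_le_add_left (abs_arg_le_pi y) _)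

lemma eq_mul_comp_mul_of_eqOn_mul_comp_add {f g h : ℂ → ℂ} {S : Set ℂ} {α β y h' : ℂ}
    (hS : IsOpen S) (hmaps : MapsTo h S S) (hf : ∀ y ∈ S, HasDerivAt f (g y) y)
    (hfeq : ∀ y ∈ S, f y = α * f (h y) + β) (hy : y ∈ S) (hh : HasDerivAt h h' y) :
    g y = α * (g (h y) * h') := by
  have hconst : (fun z => f z - α * f (h z)) =ᶠ[𝓝 y] fun _ => β := by
    filter_upwards [hS.mem_nhds hy] with z hz
    rw [hfeq z hz]; ring
  have := ((hf y hy).sub (((hf (h y) (hmaps hy)).comp y hh).const_mul α)).unique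
    ((hasDerivAt_const y β).congr_of_eventuallyEq hconst)
  exact sub_eq_zero.mp this

lemma re_eq_log_norm_add_of_exp_eq {z w α d : ℂ} (hα : α ≠ 0) (hd : d ≠ 0)
    (h : exp z = α * (exp w * d)) : z.re = Real.log ‖α‖ + w.re + Real.log ‖d‖ := by
  have := congrArg (fun x => Real.log ‖x‖) h
  simp only [norm_mul, norm_exp] at this
  rwa [Real.log_exp, Real.log_mul (norm_ne_zero_iff.mpr hα) (by positivity),
    Real.log_mul (by positivity) (norm_ne_zero_iff.mpr hd), Real.log_exp, ← add_assoc] at this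

lemma eq_zero_of_eventually_re_exp_mul_eq_zero {n θ₀ : ℝ} {z : ℂ} (hn : n ≠ 0)
    (h : ∀ᶠ θ : ℝ in 𝓝 θ₀, (exp (n * θ * I) * z).re = 0) : z = 0 := by
  set e := exp (n * θ₀ * I) * z
  have hderiv : HasDerivAt (fun θ : ℝ => (exp (n * θ * I) * z).re) (n * (I * e)).re θ₀ := by
    have : HasDerivAt (fun w : ℂ => exp (n * w * I) * z) (n * (I * e)) θ₀ := by
      refine ((((hasDerivAt_id (θ₀ : ℂ)).const_mul (n : ℂ)).mul_const I).cexp.mul_const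
        z).congr_deriv ?_
      simp only [e, id, mul_one]
      ring
    exact this.real_of_complex
  have him : e.im = 0 := by
    have := hderiv.unique ((hasDerivAt_const θ₀ (0 : ℝ)).congr_of_eventuallyEq h)
    rw [re_ofReal_mul, I_mul_re] at this
    simpa [hn] using this
  have he : e = 0 := Complex.ext h.self_of_nhds him
  simpa [e, exp_ne_zero] using he

section RayLimits

variable {k : ℕ} {γ : ℝ → ℂ} {w : ℂ}

lemma tendsto_pow_nhdsGT_zero (hk : k ≠ 0) : Tendsto (fun t : ℝ => t ^ k) (𝓝[>] 0) (𝓝 0) := by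
  simpa [zero_pow hk] using ((continuous_pow k).tendsto (0 : ℝ)).mono_left nhdsWithin_le_nhds

lemma tendsto_pow_mul_log_nhdsGT_zero (hk : k ≠ 0) :
    Tendsto (fun t : ℝ => t ^ k * Real.log t) (𝓝[>] 0) (𝓝 0) := by
  refine (tendsto_log_mul_rpow_nhdsGT_zero (r := k) (by positivity)).congr' ?_
  filter_upwards with t
  rw [Real.rpow_natCast, mul_comm]

lemma tendsto_zero_of_tendsto_div (hγ : Tendsto (fun t : ℝ => γ t / t) (𝓝[>] 0) (𝓝 w)) :
    Tendsto γ (𝓝[>] 0) (𝓝 0) := by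
  have hlim : Tendsto (fun t : ℝ => (t : ℂ) * (γ t / t)) (𝓝[>] 0) (𝓝 (0 * w)) :=
    ((continuous_ofReal.tendsto 0).mono_left nhdsWithin_le_nhds).mul hγ
  rw [zero_mul] at hlim
  refine hlim.congr' ?_
  filter_upwards [self_mem_nhdsWithin] with t (ht : 0 < t)
  exact mul_div_cancel₀ _ (ofReal_ne_zero.mpr ht.ne')

lemma tendsto_pow_mul_log_norm (hk : k ≠ 0)
    (hγ : Tendsto (fun t : ℝ => γ t / t) (𝓝[>] 0) (𝓝 w)) (hw : w ≠ 0) :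
    Tendsto (fun t : ℝ => t ^ k * Real.log ‖γ t‖) (𝓝[>] 0) (𝓝 0) := by
  have hlog : Tendsto (fun t : ℝ => Real.log ‖γ t / t‖) (𝓝[>] 0) (𝓝 (Real.log ‖w‖)) :=
    ((Real.continuousAt_log (norm_ne_zero_iff.mpr hw)).tendsto.comp
      (continuous_norm.tendsto w)).comp hγ
  have hsum := (tendsto_pow_mul_log_nhdsGT_zero hk).add
    ((tendsto_pow_nhdsGT_zero hk).mul hlog)
  rw [zero_mul, add_zero] at hsum
  refine hsum.congr' ?_
  filter_upwards [self_mem_nhdsWithin, hγ.eventually_ne hw] with t (ht : 0 < t) hγt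
  have hnorm : ‖γ t‖ = t * ‖γ t / t‖ := by
    rw [norm_div, norm_real, Real.norm_of_nonneg ht.le, mul_div_cancel₀ _ ht.ne']
  rw [hnorm, Real.log_mul ht.ne' (norm_ne_zero_iff.mpr hγt), mul_add]

lemma tendsto_pow_mul_inv_of_eventuallyEq_pow_mul {a u : ℂ → ℂ}
    (ha : ∀ᶠ y in 𝓝 0, a y = y ^ k * u y) (hu : ContinuousAt u 0) (hu0 : u 0 ≠ 0)
    (hγ : Tendsto (fun t : ℝ => γ t / t) (𝓝[>] 0) (𝓝 w)) (hw : w ≠ 0) :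
    Tendsto (fun t : ℝ => (t : ℂ) ^ k * (a (γ t))⁻¹) (𝓝[>] 0) (𝓝 (w ^ k * u 0)⁻¹) := by
  have hγ0 := tendsto_zero_of_tendsto_div hγ
  refine (((hγ.pow k).mul (hu.tendsto.comp hγ0)).inv₀
    (mul_ne_zero (pow_ne_zero k hw) hu0)).congr' ?_
  filter_upwards [self_mem_nhdsWithin, hγ0.eventually ha] with t (ht : 0 < t) hat
  have ht' : (t : ℂ) ≠ 0 := ofReal_ne_zero.mpr ht.ne'
  simp only [Function.comp, hat, div_pow, mul_inv, inv_div]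
  field_simp

lemma tendsto_pow_mul_re_mul_of_exp_eq {S : Set ℂ} {L : ℂ → ℂ} {C : ℝ} (lam : ℂ) (hk : k ≠ 0)
    (hL : ∀ y ∈ S, exp (L y) = y) (hC : ∀ y ∈ S, |(L y).im| ≤ C)
    (hγS : ∀ᶠ t in 𝓝[>] 0, γ t ∈ S) (hγ : Tendsto (fun t : ℝ => γ t / t) (𝓝[>] 0) (𝓝 w))
    (hw : w ≠ 0) : Tendsto (fun t : ℝ => t ^ k * (lam * L (γ t)).re) (𝓝[>] 0) (𝓝 0) := by
  have him : Tendsto (fun t : ℝ => t ^ k * (L (γ t)).im) (𝓝[>] 0) (𝓝 0) :=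
    (tendsto_pow_nhdsGT_zero hk).zero_mul_isBoundedUnder_le
      ⟨C, eventually_map.mpr (hγS.mono fun t ht => hC _ ht)⟩
  have hsum := ((tendsto_pow_mul_log_norm hk hγ hw).const_mul lam.re).sub (him.const_mul lam.im)
  rw [mul_zero, mul_zero, sub_zero] at hsum
  refine hsum.congr' ?_
  filter_upwards [hγS] with t ht
  have hre : (L (γ t)).re = Real.log ‖γ t‖ := by
    simpa [norm_exp] using congrArg (fun x => Real.log ‖x‖) (hL _ ht)
  rw [mul_re, hre]
  ring

lemma tendsto_pow_mul_re_mul_add_inv {S : Set ℂ} {L a u : ℂ → ℂ} {C : ℝ} (lam : ℂ) (hk : k ≠ 0)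
    (hL : ∀ y ∈ S, exp (L y) = y) (hC : ∀ y ∈ S, |(L y).im| ≤ C)
    (ha : ∀ᶠ y in 𝓝 0, a y = y ^ k * u y) (hu : ContinuousAt u 0) (hu0 : u 0 ≠ 0)
    (hγS : ∀ᶠ t in 𝓝[>] 0, γ t ∈ S) (hγ : Tendsto (fun t : ℝ => γ t / t) (𝓝[>] 0) (𝓝 w))
    (hw : w ≠ 0) :
    Tendsto (fun t : ℝ => t ^ k * (lam * L (γ t) + (a (γ t))⁻¹).re) (𝓝[>] 0)
      (𝓝 ((w ^ k * u 0)⁻¹).re) := by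
  have hsum := (tendsto_pow_mul_re_mul_of_exp_eq lam hk hL hC hγS hγ hw).add
    ((continuous_re.tendsto _).comp (tendsto_pow_mul_inv_of_eventuallyEq_pow_mul ha hu hu0 hγ hw))
  rw [zero_add] at hsum
  refine hsum.congr fun t => ?_
  simp only [Function.comp, add_re, ← ofReal_pow, re_ofReal_mul]
  ring

lemma tendsto_comp_ofReal_mul_div {h : ℂ → ℂ} {d : ℂ} (hh : HasDerivAt h d 0) (hh0 : h 0 = 0)
    (c : ℂ) : Tendsto (fun t : ℝ => h (t * c) / t) (𝓝[>] 0) (𝓝 (d * c)) := by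
  have hline : HasDerivAt (fun z : ℂ => z * c) c 0 := by
    simpa using (hasDerivAt_id (0 : ℂ)).mul_const c
  have hray : HasDerivAt (fun t : ℝ => h (t * c)) (d * c) 0 := by
    rw [← zero_mul c] at hh
    simpa using (hh.comp 0 hline).comp_ofReal (z := 0)
  refine ((hasDerivAt_iff_tendsto_slope.mp hray).mono_left (nhdsGT_le_nhdsNE 0)).congr ?_
  intro t
  simp [slope_def_module, hh0, div_eq_inv_mul]

end RayLimits

lemma re_inv_pow_mul_eq_of_functional_equation {S : Set ℂ} {f h L a u : ℂ → ℂ}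
    {α β lam c : ℂ} {k : ℕ} {C : ℝ} (hk : k ≠ 0) (hα : α ≠ 0) (hS : IsOpen S)
    (hmaps : MapsTo h S S) (hL : ∀ y ∈ S, exp (L y) = y) (hC : ∀ y ∈ S, |(L y).im| ≤ C)
    (ha : ∀ᶠ y in 𝓝 0, a y = y ^ k * u y) (hu : ContinuousAt u 0) (hu0 : u 0 ≠ 0)
    (hf : ∀ y ∈ S, HasDerivAt f (exp (lam * L y + (a y)⁻¹)) y)
    (hfeq : ∀ y ∈ S, f y = α * f (h y) + β)
    (hh : AnalyticAt ℂ h 0) (hh0 : h 0 = 0) (hh' : deriv h 0 ≠ 0)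
    (hc : c ≠ 0) (hray : ∀ᶠ t : ℝ in 𝓝[>] 0, (t : ℂ) * c ∈ S) :
    ((c ^ k * u 0)⁻¹).re = (((deriv h 0 * c) ^ k * u 0)⁻¹).re := by
  have hγ : Tendsto (fun t : ℝ => (t * c) / t) (𝓝[>] 0) (𝓝 c) := by
    simpa using tendsto_comp_ofReal_mul_div (hasDerivAt_id 0) rfl c
  have hhγ := tendsto_comp_ofReal_mul_div hh.differentiableAt.hasDerivAt hh0 c
  have hray0 := tendsto_zero_of_tendsto_div hγ
  have hderiv : ∀ᶠ y in 𝓝 0, HasDerivAt h (deriv h y) y ∧ deriv h y ≠ 0 :=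
    (hh.eventually_analyticAt.and (hh.deriv.continuousAt.eventually_ne hh')).mono
      fun y hy => ⟨hy.1.differentiableAt.hasDerivAt, hy.2⟩
  have hlog : Tendsto (fun t : ℝ => Real.log ‖deriv h (t * c)‖) (𝓝[>] 0)
      (𝓝 (Real.log ‖deriv h 0‖)) :=
    ((Real.continuousAt_log (norm_ne_zero_iff.mpr hh')).tendsto.comp
      (continuous_norm.tendsto _)).comp (hh.deriv.continuousAt.tendsto.comp hray0)
  have hlhs := tendsto_pow_mul_re_mul_add_inv lam hk hL hC ha hu hu0 hray hγ hc
  have hrhs := (((tendsto_pow_nhdsGT_zero hk).mul_const (Real.log ‖α‖)).add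
    (tendsto_pow_mul_re_mul_add_inv lam hk hL hC ha hu hu0 (hray.mono fun t ht => hmaps ht)
      hhγ (mul_ne_zero hh' hc))).add ((tendsto_pow_nhdsGT_zero hk).mul hlog)
  rw [zero_mul, zero_mul, zero_add, add_zero] at hrhs
  refine tendsto_nhds_unique (hlhs.congr' ?_) hrhs
  filter_upwards [hray, hray0.eventually hderiv] with t ht ⟨hdt, hdt0⟩
  have hrel := eq_mul_comp_mul_of_eqOn_mul_comp_add hS hmaps hf hfeq ht hdt
  rw [re_eq_log_norm_add_of_exp_eq hα hdt0 hrel]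
  ring

theorem stmt_11_general (h a u f L : ℂ → ℂ) (α β lam : ℂ) (k : ℕ)
    (hk : 1 ≤ k) (hα : α ≠ 0)
    (r θ₁ θ₂ : ℝ) (hr : 0 < r) (hθ : θ₁ < θ₂)
    (hθ₁ : -Real.pi < θ₁) (hθ₂ : θ₂ ≤ Real.pi)
    (S : Set ℂ)
    (hS : S = {y : ℂ | y ≠ 0 ∧ ‖y‖ < r ∧
      θ₁ < Complex.arg y ∧ Complex.arg y < θ₂})
    (hh : AnalyticAt ℂ h 0) (hh0 : h 0 = 0) (hh' : deriv h 0 ≠ 0)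
    (hu : AnalyticAt ℂ u 0) (hu0 : u 0 ≠ 0)
    (haord : ∀ᶠ y in nhds (0 : ℂ), a y = y ^ k * u y)
    (hmaps : Set.MapsTo h S S)
    (hLcont : ContinuousOn L S)
    (hL : ∀ y ∈ S, Complex.exp (L y) = y)
    (hf : ∀ y ∈ S, HasDerivAt f (Complex.exp (lam * L y + (a y)⁻¹)) y)
    (hfeq : ∀ y ∈ S, f y = α * f (h y) + β) :
    deriv h 0 ^ k = 1 := by
  have hk0 : k ≠ 0 := Nat.one_le_iff_ne_zero.mp hk
  change S = sector r θ₁ θ₂ at hS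
  subst hS
  obtain ⟨C, hC⟩ := exists_abs_im_le_of_exp_eq (isPreconnected_sector hθ₁ hθ₂)
    (sector_subset_slitPlane hθ₂) hLcont hL
  have hre : ∀ θ ∈ Ioo θ₁ θ₂,
      (exp ((-k : ℝ) * θ * I) * ((1 - (deriv h 0 ^ k)⁻¹) * (u 0)⁻¹)).re = 0 := by
    intro θ hθ
    have hray : ∀ᶠ t : ℝ in 𝓝[>] 0, (t : ℂ) * exp (θ * I) ∈ sector r θ₁ θ₂ := by
      filter_upwards [Ioo_mem_nhdsGT hr] with t ht
      exact ofReal_mul_exp_mem_sector hθ₁ hθ₂ ht hθ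
    have := re_inv_pow_mul_eq_of_functional_equation hk0 hα (isOpen_sector hθ₂) hmaps hL hC
      haord hu.continuousAt hu0 hf hfeq hh hh0 hh' (exp_ne_zero _) hray
    have hexp : exp ((-k : ℝ) * θ * I) = (exp (θ * I) ^ k)⁻¹ := by
      rw [← exp_nat_mul, ← exp_neg]; push_cast; ring_nf
    rw [hexp, ← sub_eq_zero.mpr this, ← sub_re]
    congr 1
    simp only [mul_pow, mul_inv]
    ring
  have hz := eq_zero_of_eventually_re_exp_mul_eq_zero (by simpa using hk0) <|
    eventually_of_mem (Ioo_mem_nhds (left_lt_add_div_two.mpr hθ) (add_div_two_lt_right.mpr hθ)) hre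
  have := (mul_eq_zero.mp hz).resolve_right (inv_ne_zero hu0)
  exact inv_eq_one.mp (sub_eq_zero.mp this).symm

/-- Let `h` be a germ of biholomorphism of `(ℂ,0)` (holomorphic at `0`, `h(0) = 0`,
`h'(0) ≠ 0`), and `a = y^k·u` a holomorphic germ vanishing to order exactly `k ≥ 1`
(`u(0) ≠ 0`).  Suppose on a sector `S` at `0` (preserved by `h`) a fixed determination
`f(y) = ∫ y^λ exp(1/a(y)) dy` (with `y^λ = exp(λ·L(y))` for a continuous branch `L` of
`log` on `S`) satisfies `f(y) = α·f(h(y)) + β` with `α ∈ ℂ*`.  Then `h'(0)^k = 1`. -/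
theorem stmt_11 (h a u f L : ℂ → ℂ) (α β lam : ℂ) (k : ℕ)
    (hk : 1 ≤ k) (hα : α ≠ 0)
    (r θ₁ θ₂ : ℝ) (hr : 0 < r) (hθ : θ₁ < θ₂)
    (hθ₁ : -Real.pi < θ₁) (hθ₂ : θ₂ ≤ Real.pi)
    (S : Set ℂ)
    (hS : S = {y : ℂ | y ≠ 0 ∧ ‖y‖ < r ∧
      θ₁ < Complex.arg y ∧ Complex.arg y < θ₂})
    (hh : AnalyticAt ℂ h 0) (hh0 : h 0 = 0) (hh' : deriv h 0 ≠ 0)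
    (ha : AnalyticAt ℂ a 0) (hu : AnalyticAt ℂ u 0) (hu0 : u 0 ≠ 0)
    (haord : ∀ᶠ y in nhds (0 : ℂ), a y = y ^ k * u y)
    (hane : ∀ y ∈ S, a y ≠ 0)
    (hmaps : Set.MapsTo h S S)
    (hLcont : ContinuousOn L S)
    (hL : ∀ y ∈ S, Complex.exp (L y) = y)
    (hf : ∀ y ∈ S, HasDerivAt f (Complex.exp (lam * L y + (a y)⁻¹)) y)
    (hfeq : ∀ y ∈ S, f y = α * f (h y) + β) :
    deriv h 0 ^ k = 1 :=
  stmt_11_general h a u f L α β lam k hk hα r θ₁ θ₂ hr hθ hθ₁ hθ₂ S hS hh hh0 hh' hu hu0 haord hmaps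
    hLcont hL hf hfeq
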